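/- Two concrete values v₁, v₂ of the same (possibly type-variable-containing) type τ (after a type substitution σ) are equal if and only if their shells are equal and, for every type variable α occurring in τ, their lists of α-holes are equal. -/
import Mathlib


/-- Polymorphic types: Unit, Sum, Prod, and type variables. -/
inductive PTy : Type
  | unit : PTy
  | sum : PTy → PTy → PTy
  | prod : PTy → PTy → PTy
  | var : ℕ → PTy
deriving DecidableEq

/-- Apply a type-variable substitution. -/
def psubst (σ : ℕ → PTy) : PTy → PTy
  | .unit => .unit
  | .sum a b => .sum (psubst σ a) (psubst σ b)
  | .prod a b => .prod (psubst σ a) (psubst σ b)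
  | .var n => σ n

/-- Concrete values. -/
inductive Val : Type
  | sole : Val
  | vleft : Val → Val
  | vright : Val → Val
  | vpair : Val → Val → Val
deriving DecidableEq

/-- Typing of concrete values. -/
inductive HasTy : Val → PTy → Prop
  | sole : HasTy .sole .unit
  | vleft {v a b} : HasTy v a → HasTy (.vleft v) (.sum a b)
  | vright {v a b} : HasTy v b → HasTy (.vright v) (.sum a b)
  | vpair {v w a b} : HasTy v a → HasTy w b → HasTy (.vpair v w) (.prod a b)

/-- A type is monomorphic (contains no type variables). -/
def Mono : PTy → Prop
  | .unit => True
  | .sum a b => Mono a ∧ Mono b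
  | .prod a b => Mono a ∧ Mono b
  | .var _ => False

/-- Shells: values with holes at type-variable positions. -/
inductive Shell : Type
  | sole : Shell
  | sleft : Shell → Shell
  | sright : Shell → Shell
  | spair : Shell → Shell → Shell
  | hole : ℕ → Shell
deriving DecidableEq

/-- The shell of a value at a (possibly polymorphic) type. -/
def shell : PTy → Val → Shell
  | .var n, _ => .hole n
  | .sum a _, .vleft v => .sleft (shell a v)
  | .sum _ b, .vright v => .sright (shell b v)
  | .prod a b, .vpair v w => .spair (shell a v) (shell b w)
  | _, _ => .sole

/-- The ordered list of α-holes of a value at a type. -/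
def holes (α : ℕ) : PTy → Val → List Val
  | .var n, v => if n = α then [v] else []
  | .sum a _, .vleft v => holes α a v
  | .sum _ b, .vright v => holes α b v
  | .prod a b, .vpair v w => holes α a v ++ holes α b w
  | _, _ => []

/-- Environment shells: per-variable shells. -/
def envshell (Δ : List PTy) (δ : List Val) : List Shell :=
  List.zipWith shell Δ δ

/-- Environment holes: concatenated α-holes across all variables. -/
def envholes (α : ℕ) (Δ : List PTy) (δ : List Val) : List Val :=
  (List.zipWith (holes α) Δ δ).flatten

/-- The equality-pattern relation on value environments. -/
def EqPat (Δ : List PTy) (δ₁ δ₂ : List Val) : Prop :=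
  envshell Δ δ₁ = envshell Δ δ₂ ∧
  ∀ (α : ℕ) (i j : ℕ) (h₁ k₁ h₂ k₂ : Val),
    (envholes α Δ δ₁)[i]? = some h₁ → (envholes α Δ δ₁)[j]? = some k₁ →
    (envholes α Δ δ₂)[i]? = some h₂ → (envholes α Δ δ₂)[j]? = some k₂ →
    (h₁ = k₁ ↔ h₂ = k₂)

/-- Well-typedness of a value environment: δ : σ(Δ). -/
def EnvTy (σ : ℕ → PTy) (Δ : List PTy) (δ : List Val) : Prop :=
  List.Forall₂ (fun τ v => HasTy v (psubst σ τ)) Δ δ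

/-- Value terms, possibly containing variables (de Bruijn style indices into Δ). -/
inductive Term : Type
  | sole : Term
  | tleft : Term → Term
  | tright : Term → Term
  | tpair : Term → Term → Term
  | var : ℕ → Term
deriving DecidableEq

/-- Denotation of a term under a value environment. -/
def denT : Term → List Val → Val
  | .sole, _ => .sole
  | .tleft t, δ => .vleft (denT t δ)
  | .tright t, δ => .vright (denT t δ)
  | .tpair s t, δ => .vpair (denT s δ) (denT t δ)
  | .var n, δ => δ.getD n .sole

/-- Typing of terms under a type environment. -/
inductive TmTy : List PTy → Term → PTy → Prop
  | sole {Δ} : TmTy Δ .sole .unit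
  | tleft {Δ t a b} : TmTy Δ t a → TmTy Δ (.tleft t) (.sum a b)
  | tright {Δ t a b} : TmTy Δ t b → TmTy Δ (.tright t) (.sum a b)
  | tpair {Δ s t a b} : TmTy Δ s a → TmTy Δ t b → TmTy Δ (.tpair s t) (.prod a b)
  | var {Δ n τ} : Δ[n]? = some τ → TmTy Δ (.var n) τ

/-- Maximum number of occurrences of type variable α in a type. -/
def cnt (α : ℕ) : PTy → ℕ
  | .unit => 0
  | .sum a b => max (cnt α a) (cnt α b)
  | .prod a b => cnt α a + cnt α b
  | .var n => if n = α then 1 else 0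

/-- Maximum number of occurrences of α in a type environment. -/
def cntEnv (α : ℕ) (Δ : List PTy) : ℕ := (Δ.map (cnt α)).sum

/-- Enumeration of the concrete values of a (monomorphic) type. -/
def enum : PTy → List Val
  | .unit => [.sole]
  | .sum a b => (enum a).map .vleft ++ (enum b).map .vright
  | .prod a b => (enum a).flatMap (fun v => (enum b).map (.vpair v))
  | .var _ => []

lemma holes_len (α : ℕ) : ∀ τ (v₁ v₂ : Val), shell τ v₁ = shell τ v₂ →
    (holes α τ v₁).length = (holes α τ v₂).length := by
  intro τ
  induction τ with
  | unit => intros; rfl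
  | var n =>
    intro v₁ v₂ _
    simp only [holes]; split <;> rfl
  | sum a b ia ib =>
    intro v₁ v₂ h
    cases v₁ <;> cases v₂ <;> simp_all [shell, holes] <;>
      first | exact ia _ _ h | exact ib _ _ h
  | prod a b ia ib =>
    intro v₁ v₂ h
    cases v₁ <;> cases v₂ <;> simp only [shell, holes, Shell.spair.injEq, List.length_append] at h ⊢ <;>
      first | rfl | exact congrArg₂ (· + ·) (ia _ _ h.1) (ib _ _ h.2) | (exact absurd h (by simp))

/-- Two concrete values of type σ(τ) are equal iff their shells are equal and,
for every type variable α, their α-hole lists are equal. -/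
theorem stmt_5 (σ : ℕ → PTy) (hσ : ∀ α, Mono (σ α)) (τ : PTy) (v₁ v₂ : Val)
    (h₁ : HasTy v₁ (psubst σ τ)) (h₂ : HasTy v₂ (psubst σ τ)) :
    v₁ = v₂ ↔ (shell τ v₁ = shell τ v₂ ∧ ∀ α : ℕ, holes α τ v₁ = holes α τ v₂) := by
  constructor
  · rintro rfl; exact ⟨rfl, fun _ => rfl⟩
  · rintro ⟨hs, hh⟩
    clear hσ
    induction τ generalizing v₁ v₂ with
    | unit => cases h₁; cases h₂; rfl
    | var n =>
      have := hh n
      simpa [holes] using this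
    | sum a b ia ib =>
      cases h₁ <;> cases h₂ <;> simp_all [shell, holes]
      · exact ia _ _ ‹_› ‹_› hs hh
      · exact ib _ _ ‹_› ‹_› hs hh
    | prod a b ia ib =>
      cases h₁; cases h₂
      simp only [shell, Shell.spair.injEq] at hs
      refine congrArg₂ Val.vpair ?_ ?_
      · apply ia _ _ ‹_› ‹_› hs.1
        intro α
        have hl := holes_len α a _ _ hs.1
        have := hh α
        simp only [holes] at this
        exact (List.append_inj this hl).1
      · apply ib _ _ ‹_› ‹_› hs.2
        intro α
        have hl := holes_len α a _ _ hs.1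
        have := hh α
        simp only [holes] at this
        exact (List.append_inj this hl).2
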